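/- For d×d symmetric positive semidefinite matrices X with Ran(C) ⊆ Ran(X) for a fixed symmetric positive semidefinite matrix C, the function X ↦ Tr(X† C) + Tr(X) is minimized at X* = C^{1/2}, with minimum value 2 Tr(C^{1/2}) = 2‖C^{1/2}‖_*. -/

import Mathlib

open Matrix

/-- The square root of a positive semidefinite matrix, as defined in the older Mathlib
(`Matrix.PosSemidef.sqrt`, since removed). -/
noncomputable def Matrix.PosSemidef.sqrt {n : Type*} [Fintype n] [DecidableEq n] {𝕜 : Type*} [RCLike 𝕜] [PartialOrder 𝕜] [StarOrderedRing 𝕜]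
    {A : Matrix n n 𝕜} (hA : A.PosSemidef) : Matrix n n 𝕜 :=
  hA.1.eigenvectorUnitary.1 * diagonal ((↑) ∘ (Real.sqrt ∘ hA.1.eigenvalues)) *
    (star hA.1.eigenvectorUnitary : Matrix n n 𝕜)

/-- The four Penrose conditions characterizing the Moore–Penrose pseudoinverse `B` of `A`. -/
def IsMoorePenrose {d : ℕ} (A B : Matrix (Fin d) (Fin d) ℝ) : Prop :=
  A * B * A = A ∧ B * A * B = B ∧ (A * B)ᵀ = A * B ∧ (B * A)ᵀ = B * A

/-! With `S = C^{1/2}` and `P = X X†` (the orthogonal projection onto `Ran X`), the range condition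
gives `P C = C`, hence `P S = S` because `(P - 1) S Sᵀ = 0`. Then
`Tr(X† C) + Tr X - 2 Tr S = Tr((S - X)ᵀ X† (S - X)) ≥ 0`, since `X†` is positive semidefinite.
At `X = S` the first Penrose condition gives `Tr(S† S²) = Tr(S S† S) = Tr S`. -/

namespace Matrix

section sqrt

open scoped ComplexOrder

variable {n : Type*} [Fintype n] [DecidableEq n] {𝕜 : Type*} [RCLike 𝕜] {A : Matrix n n 𝕜}

theorem PosSemidef.isHermitian_sqrt (hA : A.PosSemidef) : hA.sqrt.IsHermitian := by
  simp only [IsHermitian, PosSemidef.sqrt, conjTranspose_mul, diagonal_conjTranspose,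
    star_eq_conjTranspose, conjTranspose_conjTranspose, Matrix.mul_assoc]
  congr 3
  ext i
  simp

theorem PosSemidef.sqrt_mul_self (hA : A.PosSemidef) : hA.sqrt * hA.sqrt = A := by
  have hU : (star hA.1.eigenvectorUnitary : Matrix n n 𝕜) * hA.1.eigenvectorUnitary = 1 :=
    Unitary.star_mul_self_of_mem hA.1.eigenvectorUnitary.2
  conv_rhs => rw [hA.1.spectral_theorem, Unitary.conjStarAlgAut_apply]
  rw [PosSemidef.sqrt, show ∀ a b c : Matrix n n 𝕜, a * b * c * (a * b * c) = a * b * (c * a) * b * c by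
    intro a b c; noncomm_ring, hU, mul_one, Matrix.mul_assoc _ (diagonal _) (diagonal _),
    diagonal_mul_diagonal]
  congr 3
  ext i
  simp only [Function.comp_apply, ← RCLike.ofReal_mul, Real.mul_self_sqrt (hA.eigenvalues_nonneg i)]

end sqrt

theorem mul_eq_of_mul_mul_conjTranspose_eq {m n R : Type*} [Fintype m] [Fintype n]
    [DecidableEq m] [PartialOrder R] [CommRing R] [StarRing R] [StarOrderedRing R]
    [NoZeroDivisors R] {P : Matrix m m R} {S : Matrix m n R} (h : P * (S * Sᴴ) = S * Sᴴ) :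
    P * S = S := by
  have := (mul_self_mul_conjTranspose_eq_zero S (P - 1)).1 (by rw [sub_mul, h, one_mul, sub_self])
  rwa [Matrix.sub_mul, Matrix.one_mul, sub_eq_zero] at this

theorem mul_mul_eq_of_range_le {l m n R : Type*} [Fintype l] [Fintype m] [Fintype n] [CommRing R]
    {A : Matrix m n R} {B : Matrix n m R} {C : Matrix m l R} (hAB : A * B * A = A)
    (hCA : LinearMap.range C.mulVecLin ≤ LinearMap.range A.mulVecLin) : A * B * C = C := by
  refine ext_iff_mulVec.2 fun v ↦ ?_
  obtain ⟨w, hw⟩ := hCA ⟨v, rfl⟩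
  simp only [mulVecLin_apply] at hw
  rw [← mulVec_mulVec, ← hw, mulVec_mulVec, hAB]

theorem trace_mul_mul_self_of_mul_mul_eq {n R : Type*} [Fintype n] [CommRing R]
    {S B : Matrix n n R} (h : S * B * S = S) : (B * (S * S)).trace = S.trace := by
  rw [← Matrix.mul_assoc, trace_mul_comm, ← Matrix.mul_assoc, h]

end Matrix

namespace IsMoorePenrose

variable {d : ℕ} {A B : Matrix (Fin d) (Fin d) ℝ}

theorem unique {B' : Matrix (Fin d) (Fin d) ℝ} (h : IsMoorePenrose A B)
    (h' : IsMoorePenrose A B') : B = B' := by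
  obtain ⟨a, b, c, d⟩ := h
  obtain ⟨a', b', c', d'⟩ := h'
  have hAB : A * B = A * B' :=
    calc A * B = ((A * B') * (A * B))ᵀ := by rw [← Matrix.mul_assoc, a', c]
      _ = A * B * A * B' := by rw [transpose_mul, c, c', ← Matrix.mul_assoc]
      _ = A * B' := by rw [a]
  have hBA : B * A = B' * A :=
    calc B * A = ((B * A) * (B' * A))ᵀ := by rw [Matrix.mul_assoc, ← Matrix.mul_assoc A, a', d]
      _ = B' * (A * B * A) := by rw [transpose_mul, d, d']; noncomm_ring
      _ = B' * A := by rw [a]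
  rw [← b, hBA, Matrix.mul_assoc, hAB, ← Matrix.mul_assoc, b']

theorem transpose (h : IsMoorePenrose A B) : IsMoorePenrose Aᵀ Bᵀ := by
  obtain ⟨a, b, c, d⟩ := h
  refine ⟨?_, ?_, ?_, ?_⟩
  · rw [← transpose_mul, ← transpose_mul, ← Matrix.mul_assoc, a]
  · rw [← transpose_mul, ← transpose_mul, ← Matrix.mul_assoc, b]
  · rw [← transpose_mul, transpose_transpose, d]
  · rw [← transpose_mul, transpose_transpose, c]

theorem transpose_eq (hA : Aᵀ = A) (h : IsMoorePenrose A B) : Bᵀ = B :=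
  (hA ▸ h.transpose).unique h

theorem posSemidef (hA : A.PosSemidef) (h : IsMoorePenrose A B) : B.PosSemidef := by
  have hB : B = Bᴴ * A * B := by
    rw [conjTranspose_eq_transpose_of_trivial, h.transpose_eq hA.isHermitian, h.2.1]
  rw [hB]
  exact hA.conjTranspose_mul_mul_same B

theorem mul_comm (hA : Aᵀ = A) (h : IsMoorePenrose A B) : B * A = A * B := by
  rw [← h.2.2.2, transpose_mul, hA, h.transpose_eq hA]

theorem two_mul_trace_le {X S : Matrix (Fin d) (Fin d) ℝ} (hX : X.PosSemidef)
    (h : IsMoorePenrose X B) (hS : Sᵀ = S) (hXS : X * B * S = S) :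
    2 * S.trace ≤ (B * (S * S)).trace + X.trace := by
  have hXt : Xᵀ = X := hX.isHermitian
  have hres : 0 ≤ ((S - X)ᵀ * B * (S - X)).trace := by
    rw [← conjTranspose_eq_transpose_of_trivial]
    exact ((h.posSemidef hX).conjTranspose_mul_mul_same _).trace_nonneg
  have hexpand : (S - X)ᵀ * B * (S - X) = S * B * S - S * (B * X) - X * B * S + X * B * X := by
    rw [transpose_sub, hS, hXt]
    noncomm_ring
  have hSBS : (S * B * S).trace = (B * (S * S)).trace := by rw [trace_mul_cycle, trace_mul_comm]
  have hSBX : (S * (B * X)).trace = S.trace := by rw [h.mul_comm hXt, trace_mul_comm, hXS]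
  rw [hexpand, trace_add, trace_sub, trace_sub, hSBS, hSBX, hXS, h.1] at hres
  linarith

end IsMoorePenrose

/-- For symmetric positive semidefinite `X` with `Ran C ⊆ Ran X` (`C` a fixed symmetric
positive semidefinite matrix), the function `X ↦ Tr(X† C) + Tr(X)` is minimized at
`X* = C^{1/2}`, with minimum value `2 Tr(C^{1/2})`. -/
theorem stmt2 {d : ℕ} (C : Matrix (Fin d) (Fin d) ℝ) (hC : C.PosSemidef) :
    (∀ X Xdag : Matrix (Fin d) (Fin d) ℝ, X.PosSemidef → IsMoorePenrose X Xdag →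
        LinearMap.range C.mulVecLin ≤ LinearMap.range X.mulVecLin →
        2 * (Matrix.PosSemidef.sqrt hC).trace ≤ (Xdag * C).trace + X.trace) ∧
    (∀ Xstardag : Matrix (Fin d) (Fin d) ℝ, IsMoorePenrose (Matrix.PosSemidef.sqrt hC) Xstardag →
        (Xstardag * C).trace + (Matrix.PosSemidef.sqrt hC).trace = 2 * (Matrix.PosSemidef.sqrt hC).trace) := by
  have hSS : hC.sqrt * hC.sqrt = C := hC.sqrt_mul_self
  have hS : hC.sqrtᵀ = hC.sqrt := hC.isHermitian_sqrt
  refine ⟨fun X Xdag hX h hCX ↦ ?_, fun Xstardag h ↦ ?_⟩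
  · have hXS : X * Xdag * hC.sqrt = hC.sqrt := by
      refine mul_eq_of_mul_mul_conjTranspose_eq ?_
      rw [conjTranspose_eq_transpose_of_trivial, hS, hSS]
      exact mul_mul_eq_of_range_le h.1 hCX
    simpa only [hSS] using h.two_mul_trace_le hX hS hXS
  · have hXC := trace_mul_mul_self_of_mul_mul_eq h.1
    rw [hSS] at hXC
    rw [hXC, two_mul]
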